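/- arXiv:1408.5742 — 6 statements merged into one kernel-verified Lean document; each statement's English description precedes it below -/
import Mathlib

section
/- Let K be a field and n₁, n₂ positive integers. For an invertible matrix g ∈ GL(n₁+n₂, K), written in blocks g = fromBlocks A B C D (A of size n₁×n₁, D of size n₂×n₂), define the linear endomorphism T_g of the space of n₂×n₁ matrices by T_g(X) = lower-left block of g · (fromBlocks 0 0 X 0) · g⁻¹. Then det(T_g) · det(g)^{n₂} = det(D)^{n₁+n₂}. -/
open Matrix

/-- For an invertible block matrix `g`, the endomorphism `T_g` of the space of
`l × m` matrices given by `X ↦` lower-left block of `g · (fromBlocks 0 0 X 0) · g⁻¹`. -/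
noncomputable def lowerLeftConj {K : Type*} [Field K] {m l : Type*} [Fintype m] [Fintype l]
    [DecidableEq m] [DecidableEq l] (g : Matrix (m ⊕ l) (m ⊕ l) K) :
    Matrix l m K →ₗ[K] Matrix l m K where
  toFun X := (g * fromBlocks 0 0 X 0 * g⁻¹).toBlocks₂₁
  map_add' X Y := by
    show (g * fromBlocks 0 0 (X + Y) 0 * g⁻¹).toBlocks₂₁
        = (g * fromBlocks 0 0 X 0 * g⁻¹).toBlocks₂₁ + (g * fromBlocks 0 0 Y 0 * g⁻¹).toBlocks₂₁
    have h : fromBlocks (0 : Matrix m m K) (0 : Matrix m l K) (X + Y) (0 : Matrix l l K)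
        = fromBlocks 0 0 X 0 + fromBlocks 0 0 Y 0 := by
      rw [Matrix.fromBlocks_add]; simp
    rw [h, Matrix.mul_add, Matrix.add_mul]
    ext i j
    simp [Matrix.toBlocks₂₁]
  map_smul' c X := by
    show (g * fromBlocks 0 0 (c • X) 0 * g⁻¹).toBlocks₂₁
        = c • (g * fromBlocks 0 0 X 0 * g⁻¹).toBlocks₂₁
    have h : fromBlocks (0 : Matrix m m K) (0 : Matrix m l K) (c • X) (0 : Matrix l l K)
        = c • fromBlocks 0 0 X 0 := by
      rw [Matrix.fromBlocks_smul]; simp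
    rw [h, Matrix.mul_smul, Matrix.smul_mul]
    ext i j
    simp [Matrix.toBlocks₂₁]

/-!
With `G = g⁻¹`, the lower-left block of `g · (fromBlocks 0 0 X 0) · G` is `D X G₁₁`.
Vectorizing turns `X ↦ D X G₁₁` into the Kronecker product `G₁₁ᵀ ⊗ D`, of determinant
`det D ^ n₁ · det G₁₁ ^ n₂`. Jacobi's complementary minor identity `det G₁₁ · det g = det D`,
read off from `g · fromBlocks G₁₁ 0 G₂₁ 1 = fromBlocks 1 B 0 D`, finishes the computation.
-/

open scoped Kronecker

namespace Matrix

variable {R : Type*} [CommRing R] {l m : Type*}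

def vecLinearEquiv : Matrix l m R ≃ₗ[R] (m × l → R) :=
  (transposeLinearEquiv l m R R).trans (LinearEquiv.curry R R m l).symm

theorem vecLinearEquiv_apply (X : Matrix l m R) : vecLinearEquiv X = vec X := rfl

variable [Fintype l] [Fintype m] [DecidableEq l] [DecidableEq m]

theorem det_mulLeftLinearMap_comp_mulRightLinearMap (M : Matrix l l R) (N : Matrix m m R) :
    LinearMap.det (mulLeftLinearMap m R M ∘ₗ mulRightLinearMap l R N)
      = M.det ^ Fintype.card m * N.det ^ Fintype.card l := by
  have hvec : mulLeftLinearMap m R M ∘ₗ mulRightLinearMap l R N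
      = vecLinearEquiv.symm.toLinearMap ∘ₗ toLin' (Nᵀ ⊗ₖ M)
          ∘ₗ vecLinearEquiv.symm.symm.toLinearMap := by
    ext X : 1
    apply vecLinearEquiv.injective
    simp [vecLinearEquiv_apply, kronecker_mulVec_vec, Matrix.mul_assoc]
  rw [hvec, LinearMap.det_conj, LinearMap.det_toLin', det_kronecker, det_transpose, mul_comm]

theorem det_toBlocks₁₁_inv_mul_det (g : Matrix (m ⊕ l) (m ⊕ l) R) (hg : IsUnit g.det) :
    g⁻¹.toBlocks₁₁.det * g.det = g.toBlocks₂₂.det := by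
  set G := g⁻¹
  have hcol : g * fromBlocks G.toBlocks₁₁ 0 G.toBlocks₂₁ 1
      = fromBlocks 1 g.toBlocks₁₂ 0 g.toBlocks₂₂ := by
    have hgG : g * G = 1 := mul_nonsing_inv g hg
    rw [← fromBlocks_toBlocks g, ← fromBlocks_toBlocks G, fromBlocks_multiply, ← fromBlocks_one,
      fromBlocks_inj] at hgG
    obtain ⟨h₁₁, -, h₂₁, -⟩ := hgG
    conv_lhs => rw [← fromBlocks_toBlocks g]
    simp [fromBlocks_multiply, h₁₁, h₂₁]
  simpa [det_mul, det_fromBlocks_zero₁₂, det_fromBlocks_zero₂₁, mul_comm] using congrArg det hcol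

variable {K : Type*} [Field K]

theorem lowerLeftConj_eq_mulLeftLinearMap_comp_mulRightLinearMap
    (g : Matrix (m ⊕ l) (m ⊕ l) K) :
    lowerLeftConj g
      = mulLeftLinearMap m K g.toBlocks₂₂ ∘ₗ mulRightLinearMap l K g⁻¹.toBlocks₁₁ := by
  ext X : 1
  change (g * fromBlocks 0 0 X 0 * g⁻¹).toBlocks₂₁ = g.toBlocks₂₂ * (X * g⁻¹.toBlocks₁₁)
  generalize g⁻¹ = G
  rw [← fromBlocks_toBlocks g, ← fromBlocks_toBlocks G]
  simp [fromBlocks_multiply, Matrix.mul_assoc]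

end Matrix

theorem det_lowerLeftConj_GL_general {K : Type*} [Field K] {n₁ n₂ : ℕ}
    (A : Matrix (Fin n₁) (Fin n₁) K) (B : Matrix (Fin n₁) (Fin n₂) K)
    (C : Matrix (Fin n₂) (Fin n₁) K) (D : Matrix (Fin n₂) (Fin n₂) K)
    (hg : IsUnit (fromBlocks A B C D).det) :
    LinearMap.det (lowerLeftConj (fromBlocks A B C D)) * (fromBlocks A B C D).det ^ n₂
      = D.det ^ (n₁ + n₂) := by
  rw [lowerLeftConj_eq_mulLeftLinearMap_comp_mulRightLinearMap,
    det_mulLeftLinearMap_comp_mulRightLinearMap, Fintype.card_fin, Fintype.card_fin, mul_assoc,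
    ← mul_pow, det_toBlocks₁₁_inv_mul_det _ hg, toBlocks_fromBlocks₂₂, pow_add]

/-- Example 1.4 (case `s = 2`) of the paper: for `g = fromBlocks A B C D ∈ GL(n₁+n₂, K)`,
the determinant of `T_g : X ↦` lower-left block of `g · (fromBlocks 0 0 X 0) · g⁻¹`
satisfies `det(T_g) · det(g)^{n₂} = det(D)^{n₁+n₂}`. -/
theorem det_lowerLeftConj_GL {K : Type*} [Field K] {n₁ n₂ : ℕ} (hn₁ : 0 < n₁) (hn₂ : 0 < n₂)
    (A : Matrix (Fin n₁) (Fin n₁) K) (B : Matrix (Fin n₁) (Fin n₂) K)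
    (C : Matrix (Fin n₂) (Fin n₁) K) (D : Matrix (Fin n₂) (Fin n₂) K)
    (hg : IsUnit (fromBlocks A B C D).det) :
    LinearMap.det (lowerLeftConj (fromBlocks A B C D)) * (fromBlocks A B C D).det ^ n₂
      = D.det ^ (n₁ + n₂) :=
  det_lowerLeftConj_GL_general A B C D hg
end

section
/- Let K be a field, s a positive integer, and (n₁, …, n_s) a partition of n = n₁+⋯+n_s, so that indices 1 ≤ p ≤ n are partitioned into s consecutive blocks of sizes n₁, …, n_s; write blk(p) for the block index of p. Let l ∈ GL(n, K) be block-diagonal, with i-th diagonal block l_{ii} ∈ GL(n_i, K). Let W be the subspace of M_n(K) of matrices supported on positions (p, q) with blk(p) > blk(q) (strictly block-lower-triangular matrices). Then conjugation X ↦ l X l⁻¹ maps W into W, and the determinant of the induced linear endomorphism of W equals ∏_{i=1}^{s} det(l_{ii})^{(n₁+⋯+n_{i−1}) − (n_{i+1}+⋯+n_s)}. -/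
/-!
Write `l = diag(l₁, …, l_s)`. Conjugation by `l` acts on the `(i, j)` block of a matrix by
`X ↦ lᵢ X lⱼ⁻¹`, so the space of strictly block-lower-triangular matrices is the direct sum over
`j < i` of the invariant block spaces `M_{nᵢ × nⱼ}(K)`. On one block, `X ↦ A X B` has matrix
`A ⊗ Bᵀ` in the standard basis, hence determinant `det A ^ nⱼ * det B ^ nᵢ`. Collecting the factors,
`det lᵢ` receives the exponent `nⱼ` from every `j < i` and `-nⱼ` from every `j > i`.
-/
open Matrix

/-- The subspace of strictly block-lower-triangular matrices for the partition of the
index set `(i : Fin s) × Fin (n i)` into blocks: matrices supported on positions `(p, q)`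
with `blk(p) > blk(q)`. -/
def blockStrictLower (K : Type*) [Field K] {s : ℕ} (n : Fin s → ℕ) :
    Submodule K (Matrix ((i : Fin s) × Fin (n i)) ((i : Fin s) × Fin (n i)) K) where
  carrier := {X | ∀ p q : (i : Fin s) × Fin (n i), p.1 ≤ q.1 → X p q = 0}
  add_mem' := by
    intro a b ha hb p q h
    simp [Matrix.add_apply, ha p q h, hb p q h]
  zero_mem' := by
    intro p q _
    rfl
  smul_mem' := by
    intro c a ha p q h
    simp [Matrix.smul_apply, ha p q h]

/-- Conjugation `X ↦ l X l⁻¹` as a linear endomorphism of the space of matrices. -/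
noncomputable def conjLM {K : Type*} [Field K] {ι : Type*} [Fintype ι] [DecidableEq ι]
    (l : Matrix ι ι K) : Matrix ι ι K →ₗ[K] Matrix ι ι K where
  toFun X := l * X * l⁻¹
  map_add' X Y := by
    show l * (X + Y) * l⁻¹ = l * X * l⁻¹ + l * Y * l⁻¹
    rw [Matrix.mul_add, Matrix.add_mul]
  map_smul' c X := by
    show l * (c • X) * l⁻¹ = c • (l * X * l⁻¹)
    rw [Matrix.mul_smul, Matrix.smul_mul]

open Kronecker

namespace Matrix

section CommSemiring

variable {R : Type*} [CommSemiring R] {m n : Type*} [Fintype m] [Fintype n]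

def mulLeftRightLinearMap (A : Matrix m m R) (B : Matrix n n R) :
    Matrix m n R →ₗ[R] Matrix m n R where
  toFun X := A * X * B
  map_add' X Y := by rw [Matrix.mul_add, Matrix.add_mul]
  map_smul' c X := by rw [Matrix.mul_smul, Matrix.smul_mul]; rfl

@[simp]
theorem mulLeftRightLinearMap_apply (A : Matrix m m R) (B : Matrix n n R) (X : Matrix m n R) :
    mulLeftRightLinearMap A B X = A * X * B := rfl

end CommSemiring

variable {R : Type*} [CommRing R]

theorem det_blockDiagonal' {o : Type*} [Fintype o] [DecidableEq o] {m : o → Type*}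
    [∀ i, Fintype (m i)] [∀ i, DecidableEq (m i)] (M : ∀ i, Matrix (m i) (m i) R) :
    (blockDiagonal' M).det = ∏ i, (M i).det := by
  -- Any linear order on `o` makes `blockDiagonal' M` block triangular.
  let _ : LinearOrder o := LinearOrder.lift' _ (Fintype.equivFin o).injective
  have hblock (i : o) : (blockDiagonal' M).toSquareBlock Sigma.fst i
      = (M i).submatrix (Equiv.sigmaSubtype i) (Equiv.sigmaSubtype i) := by
    ext ⟨⟨_, a⟩, rfl⟩ ⟨⟨_, b⟩, hb⟩
    cases hb
    simp [toSquareBlock_def]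
  rw [(blockTriangular_blockDiagonal' M).det, Finset.prod_subset (Finset.subset_univ _)]
  · simp_rw [hblock, det_submatrix_equiv_self]
  · intro i _ hi
    have : IsEmpty (m i) := ⟨fun a => hi (Finset.mem_image.2 ⟨⟨i, a⟩, Finset.mem_univ _, rfl⟩)⟩
    have := (Equiv.sigmaSubtype (β := m) i).isEmpty
    rw [hblock, det_isEmpty]

theorem blockDiagonal'_mul_mul_blockDiagonal'_apply {α : Type*}
    [NonUnitalNonAssocSemiring α] {o : Type*} [Fintype o] [DecidableEq o]
    {l m n p : o → Type*} [∀ i, Fintype (m i)] [∀ i, Fintype (n i)]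
    (D : ∀ i, Matrix (l i) (m i) α) (X : Matrix (Σ i, m i) (Σ i, n i) α)
    (E : ∀ i, Matrix (n i) (p i) α) (i : o) (a : l i) (j : o) (b : p j) :
    (blockDiagonal' D * X * blockDiagonal' E) ⟨i, a⟩ ⟨j, b⟩
      = (D i * of (fun a' b' => X ⟨i, a'⟩ ⟨j, b'⟩) * E j) a b := by
  simp [mul_apply, Fintype.sum_sigma, blockDiagonal'_apply, dite_mul, mul_dite,
    Finset.sum_dite_irrel]

theorem inv_blockDiagonal' {o : Type*} [Fintype o] [DecidableEq o] {m : o → Type*}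
    [∀ i, Fintype (m i)] [∀ i, DecidableEq (m i)]
    {M : ∀ i, Matrix (m i) (m i) R} (hM : ∀ i, IsUnit (M i).det) :
    (blockDiagonal' M)⁻¹ = blockDiagonal' fun i => (M i)⁻¹ := by
  refine inv_eq_right_inv ?_
  simp_rw [← blockDiagonal'_mul, mul_nonsing_inv _ (hM _)]
  exact blockDiagonal'_one

variable {m n : Type*} [Fintype m] [Fintype n]

theorem det_mulLeftRightLinearMap [DecidableEq m] [DecidableEq n] (A : Matrix m m R)
    (B : Matrix n n R) :
    (mulLeftRightLinearMap A B).det = A.det ^ Fintype.card n * B.det ^ Fintype.card m := by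
  have : LinearMap.toMatrix (stdBasis R m n) (stdBasis R m n) (mulLeftRightLinearMap A B)
      = A ⊗ₖ Bᵀ := by
    ext ⟨i, j⟩ ⟨k, l⟩
    simp only [LinearMap.toMatrix_apply, stdBasis_eq_single, mulLeftRightLinearMap_apply]
    change (A * single k l (1 : R) * B) i j = _
    simp [Matrix.mul_apply, Matrix.single_apply, ite_and]
  rw [← LinearMap.det_toMatrix (stdBasis R m n), this, det_kronecker, det_transpose]

end Matrix

theorem LinearMap.det_piMap {R : Type*} [CommRing R] {ι : Type*} [Fintype ι] [DecidableEq ι]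
    {M : ι → Type*} [∀ i, AddCommGroup (M i)] [∀ i, Module R (M i)] [∀ i, Module.Free R (M i)]
    [∀ i, Module.Finite R (M i)] (f : ∀ i, M i →ₗ[R] M i) :
    (LinearMap.piMap f).det = ∏ i, (f i).det := by
  let b i := Module.Free.chooseBasis R (M i)
  have : toMatrix (Pi.basis b) (Pi.basis b) (piMap f)
      = blockDiagonal' fun i => toMatrix (b i) (b i) (f i) := by
    ext ⟨i, x⟩ ⟨j, y⟩
    rcases eq_or_ne i j with rfl | hij
    · simp [LinearMap.toMatrix_apply]
    · simp [LinearMap.toMatrix_apply, blockDiagonal'_apply, hij]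
  rw [← LinearMap.det_toMatrix (Pi.basis b), this, det_blockDiagonal']
  simp_rw [LinearMap.det_toMatrix]

section ProdPairs

variable {ι M : Type*} [Fintype ι] [LinearOrder ι]

theorem Fintype.prod_subtype_snd_lt_eq_prod_Iio [LocallyFiniteOrderBot ι] [CommMonoid M]
    (f : ι → ι → M) :
    ∏ k : {p : ι × ι // p.2 < p.1}, f k.1.1 k.1.2 = ∏ i, ∏ j ∈ Finset.Iio i, f i j := by
  rw [← Finset.prod_subtype ({p | p.2 < p.1} : Finset (ι × ι)) (by simp) fun p => f p.1 p.2,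
    Finset.prod_filter, Fintype.prod_prod_type]
  simp_rw [← Finset.prod_filter, Finset.filter_gt_eq_Iio]

theorem Fintype.prod_subtype_snd_lt_eq_prod_Ioi [LocallyFiniteOrderTop ι] [CommMonoid M]
    (f : ι → ι → M) :
    ∏ k : {p : ι × ι // p.2 < p.1}, f k.1.1 k.1.2 = ∏ j, ∏ i ∈ Finset.Ioi j, f i j := by
  rw [← Finset.prod_subtype ({p | p.2 < p.1} : Finset (ι × ι)) (by simp) fun p => f p.1 p.2,
    Finset.prod_filter, Fintype.prod_prod_type_right]
  simp_rw [← Finset.prod_filter, Finset.filter_lt_eq_Ioi]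

theorem prod_subtype_snd_lt_pow_mul_inv_pow [LocallyFiniteOrderBot ι] [LocallyFiniteOrderTop ι]
    [CommGroupWithZero M] {a : ι → M} (ha : ∀ i, a i ≠ 0) (n : ι → ℕ) :
    ∏ k : {p : ι × ι // p.2 < p.1}, a k.1.1 ^ n k.1.2 * (a k.1.2)⁻¹ ^ n k.1.1
      = ∏ i, a i ^ ((∑ j ∈ Finset.Iio i, (n j : ℤ)) - ∑ j ∈ Finset.Ioi i, (n j : ℤ)) := by
  rw [Finset.prod_mul_distrib, Fintype.prod_subtype_snd_lt_eq_prod_Iio (fun i j => a i ^ n j),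
    Fintype.prod_subtype_snd_lt_eq_prod_Ioi (fun i j => (a j)⁻¹ ^ n i), ← Finset.prod_mul_distrib]
  refine Finset.prod_congr rfl fun i _ => ?_
  rw [Finset.prod_pow_eq_pow_sum, Finset.prod_pow_eq_pow_sum, zpow_sub₀ (ha i), div_eq_mul_inv,
    ← Nat.cast_sum, ← Nat.cast_sum, zpow_natCast, zpow_natCast, inv_pow]

end ProdPairs

section BlockStrictLower

variable {K : Type*} [Field K] {s : ℕ} {n : Fin s → ℕ}

variable (K n) in
def blockStrictLowerEquiv : blockStrictLower K n ≃ₗ[K]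
    ((k : {p : Fin s × Fin s // p.2 < p.1}) → Matrix (Fin (n k.1.1)) (Fin (n k.1.2)) K) where
  toFun X k := of fun a b => X.1 ⟨k.1.1, a⟩ ⟨k.1.2, b⟩
  map_add' _ _ := rfl
  map_smul' _ _ := rfl
  invFun Y := ⟨of fun p q => if h : q.1 < p.1 then Y ⟨(p.1, q.1), h⟩ p.2 q.2 else 0,
    fun _ _ hpq => dif_neg hpq.not_gt⟩
  left_inv X := by
    ext ⟨i, a⟩ ⟨j, b⟩
    by_cases h : j < i
    · simp [h]
    · simp [h, X.2 ⟨i, a⟩ ⟨j, b⟩ (not_lt.1 h)]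
  right_inv Y := by
    ext k a b
    simp [k.2]

theorem blockDiagonal'_mul_mul_blockDiagonal'_mem_blockStrictLower
    (D E : ∀ i, Matrix (Fin (n i)) (Fin (n i)) K) {X : Matrix _ _ K}
    (hX : X ∈ blockStrictLower K n) :
    blockDiagonal' D * X * blockDiagonal' E ∈ blockStrictLower K n := by
  rintro ⟨i, a⟩ ⟨j, b⟩ hij
  have hblock : of (fun a' b' => X ⟨i, a'⟩ ⟨j, b'⟩) = 0 := by
    ext a' b'
    exact hX _ _ hij
  simp [blockDiagonal'_mul_mul_blockDiagonal'_apply, hblock]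

theorem det_restrict_blockStrictLower
    {f : Module.End K (Matrix ((i : Fin s) × Fin (n i)) ((i : Fin s) × Fin (n i)) K)}
    (D E : ∀ i, Matrix (Fin (n i)) (Fin (n i)) K)
    (hf : ∀ X, f X = blockDiagonal' D * X * blockDiagonal' E)
    (h : ∀ X ∈ blockStrictLower K n, f X ∈ blockStrictLower K n) :
    (f.restrict h).det
      = ∏ k : {p : Fin s × Fin s // p.2 < p.1},
          (D k.1.1).det ^ n k.1.2 * (E k.1.2).det ^ n k.1.1 := by
  let e := blockStrictLowerEquiv K n
  have hconj : (e : _ →ₗ[K] _) ∘ₗ f.restrict h ∘ₗ (e.symm : _ →ₗ[K] _)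
      = LinearMap.piMap fun k : {p : Fin s × Fin s // p.2 < p.1} =>
          mulLeftRightLinearMap (D k.1.1) (E k.1.2) := by
    refine LinearMap.ext fun Y => funext fun k => ?_
    have hblock : of (fun a b => (e.symm Y).1 ⟨k.1.1, a⟩ ⟨k.1.2, b⟩) = Y k :=
      congr_fun (e.apply_symm_apply Y) k
    ext a b
    change f (e.symm Y).1 ⟨k.1.1, a⟩ ⟨k.1.2, b⟩ = _
    rw [hf, blockDiagonal'_mul_mul_blockDiagonal'_apply, hblock]
    rfl
  rw [← LinearMap.det_conj _ e, hconj, LinearMap.det_piMap]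
  simp [det_mulLeftRightLinearMap]

end BlockStrictLower

theorem det_conj_blockStrictLower_general {K : Type*} [Field K] {s : ℕ}
    (n : Fin s → ℕ)
    (lb : ∀ i, Matrix (Fin (n i)) (Fin (n i)) K) (hlb : ∀ i, IsUnit (lb i).det) :
    ∃ h : ∀ X ∈ blockStrictLower K n,
        conjLM (Matrix.blockDiagonal' lb) X ∈ blockStrictLower K n,
      LinearMap.det ((conjLM (Matrix.blockDiagonal' lb)).restrict h)
        = ∏ i, (lb i).det
            ^ ((∑ j ∈ Finset.Iio i, (n j : ℤ)) - ∑ j ∈ Finset.Ioi i, (n j : ℤ)) := by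
  have hf (X) : conjLM (blockDiagonal' lb) X
      = blockDiagonal' lb * X * blockDiagonal' fun i => (lb i)⁻¹ := by
    rw [← inv_blockDiagonal' hlb]
    rfl
  refine ⟨fun X hX => hf X ▸ blockDiagonal'_mul_mul_blockDiagonal'_mem_blockStrictLower _ _ hX, ?_⟩
  rw [det_restrict_blockStrictLower _ _ hf]
  simp_rw [det_nonsing_inv, Ring.inverse_eq_inv']
  exact prod_subtype_snd_lt_pow_mul_inv_pow (fun i => (hlb i).ne_zero) n

/-- Example 1.4 of the paper: for a block-diagonal `l ∈ GL(n, K)` with invertible diagonal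
blocks `l_{ii} ∈ GL(n_i, K)`, conjugation `X ↦ l X l⁻¹` preserves the space `W` of strictly
block-lower-triangular matrices, and the determinant of the induced endomorphism of `W` is
`∏ i, det(l_{ii}) ^ ((n₁ + ⋯ + n_{i-1}) - (n_{i+1} + ⋯ + n_s))`. -/
theorem det_conj_blockStrictLower {K : Type*} [Field K] {s : ℕ} (hs : 0 < s)
    (n : Fin s → ℕ) (hn : ∀ i, 0 < n i)
    (lb : ∀ i, Matrix (Fin (n i)) (Fin (n i)) K) (hlb : ∀ i, IsUnit (lb i).det) :
    ∃ h : ∀ X ∈ blockStrictLower K n,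
        conjLM (Matrix.blockDiagonal' lb) X ∈ blockStrictLower K n,
      LinearMap.det ((conjLM (Matrix.blockDiagonal' lb)).restrict h)
        = ∏ i, (lb i).det
            ^ ((∑ j ∈ Finset.Iio i, (n j : ℤ)) - ∑ j ∈ Finset.Ioi i, (n j : ℤ)) :=
  det_conj_blockStrictLower_general n lb hlb
end

section
/- Let K be a field, n a positive integer, J = fromBlocks 0 I_n (−I_n) 0, and let Sp(2n, K) = {g ∈ GL(2n, K) : gᵀ J g = J}. Let g ∈ Sp(2n, K) be written in blocks g = fromBlocks A B C D with n×n blocks. Then: (1) for every symmetric S ∈ M_n(K), the lower-left n×n block of g · (fromBlocks 0 0 S 0) · g⁻¹ is again symmetric; (2) the determinant of the induced linear endomorphism T_g of Sym(n, K), T_g(S) = lower-left block of g · (fromBlocks 0 0 S 0) · g⁻¹, equals det(D)^{n+1}. -/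
/-! For symplectic `g = fromBlocks A B C D` the relation `gᵀ J g = J` gives
`g⁻¹ = fromBlocks Dᵀ (-Bᵀ) (-Cᵀ) Aᵀ`, so `T_g S = D S Dᵀ`: the endomorphism is congruence by `D`
on symmetric matrices. Its determinant is multiplicative in `D`, so by Gaussian elimination it
suffices to treat diagonal matrices and transvections. Congruence by `diagonal d` scales the
coordinate `S i j` (`i ≤ j`) by `d i * d j`, and each `d i` occurs `n + 1` times in these
products; congruence by a transvection `1 + E` with `E ^ 2 = 0` is unipotent. -/

open Matrix

/-- The standard symplectic form matrix `J = fromBlocks 0 I (-I) 0`. -/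
def sympJ (K : Type*) [Field K] (n : ℕ) : Matrix (Fin n ⊕ Fin n) (Fin n ⊕ Fin n) K :=
  fromBlocks 0 1 (-1) 0

/-- The subspace of symmetric `n × n` matrices over `K`. -/
def symMatrices (K : Type*) [Field K] (n : ℕ) : Submodule K (Matrix (Fin n) (Fin n) K) where
  carrier := {S | S.IsSymm}
  add_mem' := by
    intro a b ha hb
    exact Matrix.IsSymm.add ha hb
  zero_mem' := Matrix.isSymm_zero
  smul_mem' := by
    intro c a ha
    simpa [Matrix.IsSymm, Matrix.transpose_smul] using congrArg (c • ·) ha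

open Finset in
theorem Finset.prod_subtype_le_mul_eq_pow {ι M : Type*} [Fintype ι] [LinearOrder ι]
    [CommMonoid M] (d : ι → M) :
    ∏ p : {p : ι × ι // p.1 ≤ p.2}, d p.1.1 * d p.1.2 = (∏ i, d i) ^ (Fintype.card ι + 1) := by
  have hcard (i : ι) : #{j | i ≤ j} + #{j | j ≤ i} = Fintype.card ι + 1 := by
    have hunion : ({j | i ≤ j} : Finset ι) ∪ ({j | j ≤ i} : Finset ι) = univ := by
      ext j; simp [le_total i j]
    have hinter : ({j | i ≤ j} : Finset ι) ∩ ({j | j ≤ i} : Finset ι) = {i} := by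
      ext j; simp [le_antisymm_iff, and_comm]
    rw [← card_union_add_card_inter, hunion, hinter, card_univ, card_singleton]
  have hleft : ∏ p ∈ {p : ι × ι | p.1 ≤ p.2}, d p.1 = ∏ i, d i ^ #{j | i ≤ j} := by
    rw [prod_filter, Fintype.prod_prod_type]
    refine prod_congr rfl fun i _ => ?_
    rw [← prod_filter]
    exact prod_const (d i)
  have hright : ∏ p ∈ {p : ι × ι | p.1 ≤ p.2}, d p.2 = ∏ j, d j ^ #{i | i ≤ j} := by
    rw [prod_filter, Fintype.prod_prod_type, prod_comm]
    refine prod_congr rfl fun j _ => ?_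
    rw [← prod_filter]
    exact prod_const (d j)
  rw [← prod_subtype _ mem_filter_univ fun p : ι × ι => d p.1 * d p.2, prod_mul_distrib, hleft,
    hright, ← prod_mul_distrib]
  simp only [← pow_add, hcard, prod_pow]

open Polynomial in
theorem LinearMap.det_one_add_of_isNilpotent {R M : Type*} [CommRing R] [IsDomain R]
    [AddCommGroup M] [Module R M] [Module.Free R M] [Module.Finite R M] {N : Module.End R M}
    (hN : IsNilpotent N) : LinearMap.det (1 + N) = 1 := by
  have h : 1 + N = N - (-1 : R) • 1 := by rw [neg_one_smul, sub_neg_eq_add, add_comm]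
  rw [h, det_eq_sign_charpoly_coeff, charpoly_sub_smul, hN.charpoly_eq_X_pow_finrank,
    coeff_zero_eq_eval_zero]
  simp [← mul_pow]

namespace Matrix

theorem toBlocks₂₁_mul_fromBlocks_zero_mul {R m l : Type*} [Semiring R] [Fintype m] [Fintype l]
    (g h : Matrix (m ⊕ l) (m ⊕ l) R) (X : Matrix l m R) :
    (g * fromBlocks 0 0 X 0 * h).toBlocks₂₁ = g.toBlocks₂₂ * X * h.toBlocks₁₁ := by
  rw [← fromBlocks_toBlocks g, ← fromBlocks_toBlocks h]
  simp [fromBlocks_multiply, Matrix.mul_assoc]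

theorem inv_fromBlocks_of_mem_symplecticGroup {R l : Type*} [CommRing R] [Fintype l]
    [DecidableEq l] {A B C D : Matrix l l R} (hg : fromBlocks A B C D ∈ symplecticGroup l R) :
    (fromBlocks A B C D)⁻¹ = fromBlocks Dᵀ (-Bᵀ) (-Cᵀ) Aᵀ := by
  rw [SymplecticGroup.inv_eq_symplectic_inv _ hg, J, fromBlocks_transpose, fromBlocks_neg,
    fromBlocks_multiply, fromBlocks_multiply]
  simp

theorem IsSymm.mul_mul_transpose {R m l : Type*} [CommSemiring R] [Fintype m]
    {S : Matrix m m R} (hS : S.IsSymm) (M : Matrix l m R) : (M * S * Mᵀ).IsSymm := by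
  rw [IsSymm, transpose_mul, transpose_mul, transpose_transpose, hS.eq, Matrix.mul_assoc]

end Matrix

section Symplectic

variable {K : Type*} [Field K]

theorem sympJ_eq_neg_J (n : ℕ) : sympJ K n = -J (Fin n) K := by
  simp [sympJ, J, fromBlocks_neg]

theorem mem_symplecticGroup_iff_transpose_mul_sympJ_mul {n : ℕ}
    {g : Matrix (Fin n ⊕ Fin n) (Fin n ⊕ Fin n) K} :
    g ∈ symplecticGroup (Fin n) K ↔ gᵀ * sympJ K n * g = sympJ K n := by
  rw [SymplecticGroup.mem_iff', sympJ_eq_neg_J, Matrix.mul_neg, Matrix.neg_mul, neg_inj]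

theorem lowerLeftConj_apply_of_mem_symplecticGroup {l : Type*} [Fintype l] [DecidableEq l]
    {A B C D : Matrix l l K} (hg : fromBlocks A B C D ∈ symplecticGroup l K) (S : Matrix l l K) :
    lowerLeftConj (fromBlocks A B C D) S = D * S * Dᵀ := by
  rw [lowerLeftConj, LinearMap.coe_mk, AddHom.coe_mk, toBlocks₂₁_mul_fromBlocks_zero_mul,
    inv_fromBlocks_of_mem_symplecticGroup hg, toBlocks_fromBlocks₂₂, toBlocks_fromBlocks₁₁]

end Symplectic

namespace symMatrices

variable {K : Type*} [Field K] {n : ℕ}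

def congr (M : Matrix (Fin n) (Fin n) K) : symMatrices K n →ₗ[K] symMatrices K n where
  toFun S := ⟨M * S * Mᵀ, IsSymm.mul_mul_transpose S.2 M⟩
  map_add' S T := Subtype.ext <| by simp [Matrix.mul_add, Matrix.add_mul]
  map_smul' c S := Subtype.ext <| by simp

@[simp]
theorem coe_congr_apply (M : Matrix (Fin n) (Fin n) K) (S : symMatrices K n) :
    (congr M S : Matrix (Fin n) (Fin n) K) = M * S * Mᵀ := rfl

theorem congr_mul (M N : Matrix (Fin n) (Fin n) K) :
    congr (M * N) = congr M ∘ₗ congr N := by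
  ext S : 2
  simp [Matrix.mul_assoc]

def equivFun (K : Type*) [Field K] (n : ℕ) :
    symMatrices K n ≃ₗ[K] ({p : Fin n × Fin n // p.1 ≤ p.2} → K) where
  toFun S p := S.1 p.1.1 p.1.2
  map_add' S T := rfl
  map_smul' c S := rfl
  invFun f := ⟨of fun i j => f ⟨(min i j, max i j), min_le_max⟩,
    IsSymm.ext fun i j => by simp only [of_apply, min_comm, max_comm]⟩
  left_inv S := by
    ext i j
    rcases le_total i j with h | h
    · simp [h]
    · simpa [h] using S.2.apply i j
  right_inv f := by
    ext p
    simp [p.2]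

@[simp]
theorem equivFun_apply (S : symMatrices K n) (p : {p : Fin n × Fin n // p.1 ≤ p.2}) :
    equivFun K n S p = S.1 p.1.1 p.1.2 := rfl

@[simp]
theorem coe_equivFun_symm_apply (f : {p : Fin n × Fin n // p.1 ≤ p.2} → K) (i j : Fin n) :
    ((equivFun K n).symm f : Matrix (Fin n) (Fin n) K) i j = f ⟨(min i j, max i j), min_le_max⟩ :=
  rfl

theorem det_congr_diagonal (d : Fin n → K) :
    LinearMap.det (congr (diagonal d)) = (diagonal d).det ^ (n + 1) := by
  have h : (equivFun K n).toLinearMap ∘ₗ congr (diagonal d) ∘ₗ (equivFun K n).symm.toLinearMap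
      = (diagonal fun p : {p : Fin n × Fin n // p.1 ≤ p.2} => d p.1.1 * d p.1.2).toLin' := by
    refine LinearMap.ext fun f => funext fun p => ?_
    simp [mulVec_diagonal, min_eq_left p.2, max_eq_right p.2, mul_right_comm]
  rw [← LinearMap.det_conj _ (equivFun K n), h, LinearMap.det_toLin', det_diagonal, det_diagonal,
    Finset.prod_subtype_le_mul_eq_pow, Fintype.card_fin]

theorem isNilpotent_congr_one_add_sub_one {E : Matrix (Fin n) (Fin n) K} (hE : E * E = 0) :
    IsNilpotent (congr (1 + E) - 1) := by
  have hEt : Eᵀ * Eᵀ = 0 := by rw [← transpose_mul, hE, transpose_zero]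
  have hE' (X : Matrix (Fin n) (Fin n) K) : E * (E * X) = 0 := by
    rw [← Matrix.mul_assoc, hE, Matrix.zero_mul]
  have hstep (S : symMatrices K n) :
      (((congr (1 + E) - 1 : Module.End K (symMatrices K n)) S : symMatrices K n) :
        Matrix (Fin n) (Fin n) K) = E * S + S * Eᵀ + E * S * Eᵀ := by
    simp only [LinearMap.sub_apply, Submodule.coe_sub, coe_congr_apply, Module.End.one_apply,
      transpose_add, transpose_one, Matrix.add_mul, Matrix.mul_add, Matrix.one_mul,
      Matrix.mul_one]
    abel
  refine ⟨3, LinearMap.ext fun S => Subtype.ext ?_⟩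
  simp only [pow_succ, pow_zero, one_mul, Module.End.mul_apply, hstep]
  simp [Matrix.mul_add, Matrix.add_mul, Matrix.mul_assoc, hE', hEt]

theorem det_congr_transvection {i j : Fin n} (hij : i ≠ j) (c : K) :
    LinearMap.det (congr (transvection i j c)) = 1 := by
  have hE : Matrix.single i j c * Matrix.single i j c = 0 :=
    Matrix.single_mul_single_of_ne c i j i hij.symm c
  rw [transvection, ← add_sub_cancel (1 : Module.End K (symMatrices K n)) (congr _)]
  exact LinearMap.det_one_add_of_isNilpotent (isNilpotent_congr_one_add_sub_one hE)

theorem det_congr (M : Matrix (Fin n) (Fin n) K) :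
    LinearMap.det (congr M) = M.det ^ (n + 1) := by
  induction M using diagonal_transvection_induction with
  | hdiag d _ => exact det_congr_diagonal d
  | htransvec t =>
    rw [TransvectionStruct.toMatrix, det_congr_transvection t.hij, det_transvection_of_ne _ _ t.hij,
      one_pow]
  | hmul P Q hP hQ => rw [congr_mul, LinearMap.det_comp, hP, hQ, det_mul, mul_pow]

end symMatrices

theorem det_lowerLeftConj_Sp_general {K : Type*} [Field K] {n : ℕ}
    (A B C D : Matrix (Fin n) (Fin n) K)
    (hsp : (fromBlocks A B C D)ᵀ * sympJ K n * fromBlocks A B C D = sympJ K n) :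
    (∀ S : Matrix (Fin n) (Fin n) K, S.IsSymm →
      ((fromBlocks A B C D * fromBlocks 0 0 S 0 * (fromBlocks A B C D)⁻¹).toBlocks₂₁).IsSymm) ∧
    ∃ h : ∀ X ∈ symMatrices K n, lowerLeftConj (fromBlocks A B C D) X ∈ symMatrices K n,
      LinearMap.det ((lowerLeftConj (fromBlocks A B C D)).restrict h) = D.det ^ (n + 1) := by
  have hg := mem_symplecticGroup_iff_transpose_mul_sympJ_mul.2 hsp
  have hsymm (S : Matrix (Fin n) (Fin n) K) (hS : S.IsSymm) :
      (lowerLeftConj (fromBlocks A B C D) S).IsSymm := by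
    rw [lowerLeftConj_apply_of_mem_symplecticGroup hg]
    exact hS.mul_mul_transpose D
  refine ⟨hsymm, hsymm, ?_⟩
  have hT : (lowerLeftConj (fromBlocks A B C D)).restrict hsymm = symMatrices.congr D :=
    LinearMap.ext fun S => Subtype.ext (lowerLeftConj_apply_of_mem_symplecticGroup hg S)
  rw [hT, symMatrices.det_congr]

/-- Example 1.5 of the paper: for `g = fromBlocks A B C D ∈ Sp(2n, K)`, (1) the lower-left
block of `g · (fromBlocks 0 0 S 0) · g⁻¹` is symmetric whenever `S` is, and (2) the induced
endomorphism `T_g` of the space of symmetric matrices has determinant `det(D)^{n+1}`. -/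
theorem det_lowerLeftConj_Sp {K : Type*} [Field K] {n : ℕ} (hn : 0 < n)
    (A B C D : Matrix (Fin n) (Fin n) K)
    (hsp : (fromBlocks A B C D)ᵀ * sympJ K n * fromBlocks A B C D = sympJ K n) :
    (∀ S : Matrix (Fin n) (Fin n) K, S.IsSymm →
      ((fromBlocks A B C D * fromBlocks 0 0 S 0 * (fromBlocks A B C D)⁻¹).toBlocks₂₁).IsSymm) ∧
    ∃ h : ∀ X ∈ symMatrices K n, lowerLeftConj (fromBlocks A B C D) X ∈ symMatrices K n,
      LinearMap.det ((lowerLeftConj (fromBlocks A B C D)).restrict h) = D.det ^ (n + 1) :=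
  det_lowerLeftConj_Sp_general A B C D hsp
end

section
/- Let K be a field, n a positive integer, J = fromBlocks 0 I_n (−I_n) 0, and Sp(2n, K) = {g ∈ GL(2n, K) : gᵀ J g = J}. For g ∈ Sp(2n, K) written in blocks g = fromBlocks A B C D with n×n blocks, the following are equivalent: (i) det(D) ≠ 0; (ii) there exist a symmetric matrix Z ∈ Sym(n, K) and p ∈ Sp(2n, K) whose upper-right n×n block is zero, such that g = (fromBlocks I_n Z 0 I_n) · p. Moreover, when they hold, Z and p are uniquely determined by g. -/
/-!
Up to sign, the form `sympJ` is Mathlib's `J`, so the condition `gᵀ J g = J` is membership in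
`Matrix.symplecticGroup`, and there `g = fromBlocks A B C D` is symplectic iff `AᵀC` and `BᵀD` are
symmetric and `AᵀD - CᵀB = 1`. If `g = u(Z) p` with `u(Z) = fromBlocks 1 Z 0 1` and `p` block lower
triangular, then `D` is the lower-right block of `p`, invertible because `Pᵀ D = 1`, and `B = Z D`;
so `Z = B D⁻¹` and `p = u(-Z) g` are forced. Conversely, if `D` is invertible then `B D⁻¹` is
symmetric because `BᵀD` is, so `u(B D⁻¹)` is symplectic and `p := u(-B D⁻¹) g` works.
-/

open Matrix

lemma transpose_mul_sympJ_mul_eq_iff_mem_symplecticGroup {K : Type*} [Field K] {n : ℕ}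
    (g : Matrix (Fin n ⊕ Fin n) (Fin n ⊕ Fin n) K) :
    gᵀ * sympJ K n * g = sympJ K n ↔ g ∈ symplecticGroup (Fin n) K := by
  have hJ : sympJ K n = -J (Fin n) K := by simp [sympJ, J, fromBlocks_neg]
  rw [SymplecticGroup.mem_iff', hJ, Matrix.mul_neg, Matrix.neg_mul, neg_inj]

section

variable {l R : Type*} [Fintype l] [DecidableEq l] [CommRing R]

lemma fromBlocks_one_mul_fromBlocks_one (Y Z : Matrix l l R) :
    fromBlocks 1 Y (0 : Matrix l l R) 1 * fromBlocks 1 Z 0 1 = fromBlocks 1 (Y + Z) 0 1 := by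
  simp [fromBlocks_multiply, add_comm]

lemma eq_fromBlocks_one_mul_iff (Z : Matrix l l R) (g p : Matrix (l ⊕ l) (l ⊕ l) R) :
    g = fromBlocks 1 Z 0 1 * p ↔ p = fromBlocks 1 (-Z) 0 1 * g := by
  constructor <;> rintro rfl <;>
    rw [← Matrix.mul_assoc, fromBlocks_one_mul_fromBlocks_one] <;> simp [fromBlocks_one]

lemma fromBlocks_one_mem_symplecticGroup_iff (Z : Matrix l l R) :
    fromBlocks 1 Z 0 1 ∈ symplecticGroup l R ↔ Z.IsSymm := by
  simp [SymplecticGroup.fromBlocks_mem_iff, IsSymm]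

lemma isSymm_mul_nonsing_inv {B D : Matrix l l R} (hBD : Bᵀ * D = Dᵀ * B) (hD : IsUnit D.det) :
    (B * D⁻¹).IsSymm := by
  have hDT : IsUnit Dᵀ.det := by rwa [det_transpose]
  calc (B * D⁻¹)ᵀ = Dᵀ⁻¹ * (Bᵀ * D) * D⁻¹ := by
        rw [transpose_mul, transpose_nonsing_inv, Matrix.mul_assoc, Matrix.mul_assoc,
          mul_nonsing_inv _ hD, Matrix.mul_one]
    _ = B * D⁻¹ := by
        rw [hBD, ← Matrix.mul_assoc, nonsing_inv_mul _ hDT, Matrix.one_mul]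

lemma isUnit_det_and_eq_mul_nonsing_inv_of_eq_fromBlocks_one_mul
    {A B C D Z : Matrix l l R} {p : Matrix (l ⊕ l) (l ⊕ l) R}
    (hp : p ∈ symplecticGroup l R) (hp₁₂ : p.toBlocks₁₂ = 0)
    (hg : fromBlocks A B C D = fromBlocks 1 Z 0 1 * p) :
    IsUnit D.det ∧ Z = B * D⁻¹ := by
  rw [← fromBlocks_toBlocks p, hp₁₂] at hp hg
  obtain ⟨-, -, hPD⟩ := SymplecticGroup.fromBlocks_mem_iff.1 hp
  obtain ⟨-, hB, -, hD⟩ := fromBlocks_inj.1 (hg.trans (fromBlocks_multiply ..))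
  simp only [Matrix.mul_zero, Matrix.one_mul, zero_add, sub_zero] at hB hD hPD
  subst hB hD
  have hD : IsUnit p.toBlocks₂₂.det := isUnit_det_of_left_inverse hPD
  exact ⟨hD, by rw [Matrix.mul_assoc, mul_nonsing_inv _ hD, Matrix.mul_one]⟩

end

theorem bigCell_Sp_general {K : Type*} [Field K] {n : ℕ}
    (A B C D : Matrix (Fin n) (Fin n) K)
    (hsp : (fromBlocks A B C D)ᵀ * sympJ K n * fromBlocks A B C D = sympJ K n) :
    (IsUnit D.det ↔
      ∃ (Z : Matrix (Fin n) (Fin n) K) (p : Matrix (Fin n ⊕ Fin n) (Fin n ⊕ Fin n) K),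
        Z.IsSymm ∧ pᵀ * sympJ K n * p = sympJ K n ∧ p.toBlocks₁₂ = 0 ∧
          fromBlocks A B C D = fromBlocks 1 Z 0 1 * p) ∧
    (∀ (Z Z' : Matrix (Fin n) (Fin n) K) (p p' : Matrix (Fin n ⊕ Fin n) (Fin n ⊕ Fin n) K),
      Z.IsSymm → pᵀ * sympJ K n * p = sympJ K n → p.toBlocks₁₂ = 0 →
      Z'.IsSymm → p'ᵀ * sympJ K n * p' = sympJ K n → p'.toBlocks₁₂ = 0 →
      fromBlocks A B C D = fromBlocks 1 Z 0 1 * p →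
      fromBlocks A B C D = fromBlocks 1 Z' 0 1 * p' →
      Z = Z' ∧ p = p') := by
  simp only [transpose_mul_sympJ_mul_eq_iff_mem_symplecticGroup] at hsp ⊢
  refine ⟨⟨fun hD ↦ ?_, fun ⟨Z, p, _, hp, hp₁₂, hg⟩ ↦
    (isUnit_det_and_eq_mul_nonsing_inv_of_eq_fromBlocks_one_mul hp hp₁₂ hg).1⟩, ?_⟩
  · obtain ⟨-, hBD, -⟩ := SymplecticGroup.fromBlocks_mem_iff.1 hsp
    have hZ := isSymm_mul_nonsing_inv hBD hD
    refine ⟨B * D⁻¹, fromBlocks 1 (-(B * D⁻¹)) 0 1 * fromBlocks A B C D, hZ,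
      mul_mem ((fromBlocks_one_mem_symplecticGroup_iff _).2 hZ.neg) hsp, ?_,
      (eq_fromBlocks_one_mul_iff _ _ _).2 rfl⟩
    simp [fromBlocks_multiply, Matrix.mul_assoc, nonsing_inv_mul _ hD]
  · intro Z Z' p p' _ hp hp₁₂ _ hp' hp'₁₂ hg hg'
    obtain rfl : Z = Z' :=
      (isUnit_det_and_eq_mul_nonsing_inv_of_eq_fromBlocks_one_mul hp hp₁₂ hg).2.trans
        (isUnit_det_and_eq_mul_nonsing_inv_of_eq_fromBlocks_one_mul hp' hp'₁₂ hg').2.symm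
    exact ⟨rfl, ((eq_fromBlocks_one_mul_iff _ _ _).1 hg).trans
      ((eq_fromBlocks_one_mul_iff _ _ _).1 hg').symm⟩

/-- The Siegel parabolic big cell for `Sp(2n, K)` (Lemma 1.1 (3),(4) and Example 1.5 of the
paper): `g = fromBlocks A B C D ∈ Sp(2n, K)` has `det D ≠ 0` iff it factors as
`g = (fromBlocks 1 Z 0 1) · p` with `Z` symmetric and `p ∈ Sp(2n, K)` with vanishing
upper-right block; moreover such a factorization is unique. -/
theorem bigCell_Sp {K : Type*} [Field K] {n : ℕ} (hn : 0 < n)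
    (A B C D : Matrix (Fin n) (Fin n) K)
    (hsp : (fromBlocks A B C D)ᵀ * sympJ K n * fromBlocks A B C D = sympJ K n) :
    (IsUnit D.det ↔
      ∃ (Z : Matrix (Fin n) (Fin n) K) (p : Matrix (Fin n ⊕ Fin n) (Fin n ⊕ Fin n) K),
        Z.IsSymm ∧ pᵀ * sympJ K n * p = sympJ K n ∧ p.toBlocks₁₂ = 0 ∧
          fromBlocks A B C D = fromBlocks 1 Z 0 1 * p) ∧
    (∀ (Z Z' : Matrix (Fin n) (Fin n) K) (p p' : Matrix (Fin n ⊕ Fin n) (Fin n ⊕ Fin n) K),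
      Z.IsSymm → pᵀ * sympJ K n * p = sympJ K n → p.toBlocks₁₂ = 0 →
      Z'.IsSymm → p'ᵀ * sympJ K n * p' = sympJ K n → p'.toBlocks₁₂ = 0 →
      fromBlocks A B C D = fromBlocks 1 Z 0 1 * p →
      fromBlocks A B C D = fromBlocks 1 Z' 0 1 * p' →
      Z = Z' ∧ p = p') :=
  bigCell_Sp_general A B C D hsp
end

section
/- Let K be a field and n a positive integer. Let g = u · t · v ∈ GL(n, K), where u is upper-triangular unipotent, t is an invertible diagonal matrix with diagonal entries t₁, …, t_n, and v is lower-triangular unipotent. Let W be the subspace of M_n(K) of strictly lower-triangular matrices, and let π : M_n(K) → W be the projection along the span of the elementary matrices E_{pq} with p ≤ q. Then the determinant of the linear endomorphism X ↦ π(g X g⁻¹) of W equals ∏_{i>j} t_i t_j⁻¹. -/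
open Matrix

/-- The subspace `W` of strictly lower-triangular `n × n` matrices. -/
def strictLower (K : Type*) [Field K] (n : ℕ) : Submodule K (Matrix (Fin n) (Fin n) K) where
  carrier := {X | ∀ i j : Fin n, i ≤ j → X i j = 0}
  add_mem' := by
    intro a b ha hb i j h
    simp [Matrix.add_apply, ha i j h, hb i j h]
  zero_mem' := by
    intro i j _
    rfl
  smul_mem' := by
    intro c a ha i j h
    simp [Matrix.smul_apply, ha i j h]

/-- The projection `π` of `n × n` matrices onto the strictly lower-triangular part, along
the span of the elementary matrices `E_{pq}` with `p ≤ q`. -/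
def lowerTrunc {K : Type*} [Field K] {n : ℕ} (M : Matrix (Fin n) (Fin n) K) :
    Matrix (Fin n) (Fin n) K :=
  Matrix.of fun i j => if j < i then M i j else 0

/-- The endomorphism `X ↦ π (g X g⁻¹)` of the space of strictly lower-triangular
matrices, where `π` is the projection along the span of the `E_{pq}` with `p ≤ q`. -/
noncomputable def lowerConj {K : Type*} [Field K] {n : ℕ} (g : Matrix (Fin n) (Fin n) K) :
    strictLower K n →ₗ[K] strictLower K n where
  toFun X := ⟨lowerTrunc (g * (X : Matrix (Fin n) (Fin n) K) * g⁻¹), by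
    intro i j h
    simp [lowerTrunc, not_lt.mpr h]⟩
  map_add' X Y := by
    apply Subtype.ext
    show lowerTrunc (g * ((X : Matrix (Fin n) (Fin n) K) + (Y : Matrix (Fin n) (Fin n) K)) * g⁻¹)
        = lowerTrunc (g * (X : Matrix (Fin n) (Fin n) K) * g⁻¹)
          + lowerTrunc (g * (Y : Matrix (Fin n) (Fin n) K) * g⁻¹)
    rw [Matrix.mul_add, Matrix.add_mul]
    ext i j
    by_cases h : j < i <;>
      simp [lowerTrunc, Matrix.of_apply, Matrix.add_apply, h]
  map_smul' c X := by
    apply Subtype.ext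
    show lowerTrunc (g * (c • (X : Matrix (Fin n) (Fin n) K)) * g⁻¹)
        = c • lowerTrunc (g * (X : Matrix (Fin n) (Fin n) K) * g⁻¹)
    rw [Matrix.mul_smul, Matrix.smul_mul]
    ext i j
    by_cases h : j < i <;>
      simp [lowerTrunc, Matrix.of_apply, Matrix.smul_apply, h]

/-!
Along `g = u t v` the map `π ∘ Ad` is multiplicative: conjugation by an upper triangular
matrix preserves `ker π` (the upper triangular matrices), and conjugation by a lower triangular
matrix preserves `W`. In the basis `E_{ij}` (`i > j`) of `W`, the matrix of `π ∘ Ad g` has entry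
`g i k * g⁻¹ l j` at `((i, j), (k, l))`. For triangular `g` it is triangular for a lexicographic
order on the pairs, so the determinant is `∏_{i > j} g_ii / g_jj`: this is `1` for the unipotent
factors and `∏_{i > j} t_i / t_j` for `t`.
-/

namespace Matrix.BlockTriangular

variable {m α R : Type*} [Fintype m] [LinearOrder α] {b : m → α}

theorem det_of_injective [DecidableEq m] [CommRing R] {M : Matrix m m R}
    (hM : M.BlockTriangular b) (hb : b.Injective) : M.det = ∏ i, M i i :=
  let _ : LinearOrder m := LinearOrder.lift' b hb
  det_of_isUpperTriangular hM

theorem inv [DecidableEq m] [CommRing R] {M : Matrix m m R} (hM : M.BlockTriangular b) :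
    M⁻¹.BlockTriangular b := by
  by_cases h : IsUnit M.det
  · let _ : Invertible M := M.invertibleOfIsUnitDet h
    exact blockTriangular_inv_of_blockTriangular hM
  · rw [nonsing_inv_apply_not_isUnit M h]
    exact blockTriangular_zero

theorem mul_apply_self_of_injective [NonUnitalNonAssocSemiring R] {M N : Matrix m m R}
    (hM : M.BlockTriangular b) (hN : N.BlockTriangular b) (hb : b.Injective) (i : m) :
    (M * N) i i = M i i * N i i := by
  refine Finset.sum_eq_single i (fun k _ hki => ?_) (by simp)
  rcases lt_or_gt_of_ne (hb.ne hki) with hlt | hgt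
  · simp [hM hlt]
  · simp [hN hgt]

theorem inv_apply_self_of_injective [DecidableEq m] [Field R] {M : Matrix m m R}
    (hM : M.BlockTriangular b) (hb : b.Injective) (hdet : IsUnit M.det) (i : m) :
    M⁻¹ i i = (M i i)⁻¹ := by
  refine eq_inv_of_mul_eq_one_right ?_
  rw [← hM.mul_apply_self_of_injective hM.inv hb, mul_nonsing_inv M hdet, one_apply_eq]

end Matrix.BlockTriangular

section StrictLower

variable {K : Type*} [Field K] {n : ℕ}

theorem lowerTrunc_add (A B : Matrix (Fin n) (Fin n) K) :
    lowerTrunc (A + B) = lowerTrunc A + lowerTrunc B := by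
  ext i j
  by_cases h : j < i <;> simp [lowerTrunc, h]

theorem lowerTrunc_eq_zero {B : Matrix (Fin n) (Fin n) K} (hB : B.IsUpperTriangular) :
    lowerTrunc B = 0 := by
  ext i j
  simp only [lowerTrunc, of_apply, Matrix.zero_apply]
  split_ifs with h
  exacts [hB h, rfl]

theorem lowerTrunc_eq_self {X : Matrix (Fin n) (Fin n) K} (hX : X ∈ strictLower K n) :
    lowerTrunc X = X := by
  ext i j
  by_cases h : j < i
  · simp [lowerTrunc, h]
  · simp [lowerTrunc, h, hX i j (not_lt.mp h)]

theorem isUpperTriangular_sub_lowerTrunc (Y : Matrix (Fin n) (Fin n) K) :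
    (Y - lowerTrunc Y).IsUpperTriangular := by
  intro i j h
  simp [lowerTrunc, show j < i from h]

theorem Matrix.IsLowerTriangular.mul_mem_strictLower {A X : Matrix (Fin n) (Fin n) K}
    (hA : A.IsLowerTriangular) (hX : X ∈ strictLower K n) : A * X ∈ strictLower K n := by
  intro i j hij
  rw [mul_apply]
  refine Finset.sum_eq_zero fun k _ => ?_
  rcases lt_or_ge i k with hik | hki
  · rw [hA (show OrderDual.toDual k < OrderDual.toDual i from hik), zero_mul]
  · rw [hX k j (hki.trans hij), mul_zero]

theorem Matrix.IsLowerTriangular.mem_strictLower_mul {A X : Matrix (Fin n) (Fin n) K}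
    (hA : A.IsLowerTriangular) (hX : X ∈ strictLower K n) : X * A ∈ strictLower K n := by
  intro i j hij
  rw [mul_apply]
  refine Finset.sum_eq_zero fun k _ => ?_
  rcases le_or_gt i k with hik | hki
  · rw [hX i k hik, zero_mul]
  · rw [hA (show OrderDual.toDual j < OrderDual.toDual k from hki.trans_le hij), mul_zero]

@[simp]
theorem coe_lowerConj (g : Matrix (Fin n) (Fin n) K) (X : strictLower K n) :
    (lowerConj g X : Matrix (Fin n) (Fin n) K)
      = lowerTrunc (g * (X : Matrix (Fin n) (Fin n) K) * g⁻¹) :=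
  rfl

theorem lowerConj_mul_of_isUpperTriangular {a : Matrix (Fin n) (Fin n) K}
    (ha : a.IsUpperTriangular) (b : Matrix (Fin n) (Fin n) K) :
    lowerConj (a * b) = lowerConj a ∘ₗ lowerConj b := by
  ext X : 2
  set Y := b * (X : Matrix (Fin n) (Fin n) K) * b⁻¹
  have hsplit : a * b * X * (a * b)⁻¹
      = a * lowerTrunc Y * a⁻¹ + a * (Y - lowerTrunc Y) * a⁻¹ := by
    rw [Matrix.mul_inv_rev, ← Matrix.add_mul, ← Matrix.mul_add, add_sub_cancel]
    simp only [Y, Matrix.mul_assoc]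
  have hupper : (a * (Y - lowerTrunc Y) * a⁻¹).IsUpperTriangular :=
    (ha.mul (isUpperTriangular_sub_lowerTrunc Y)).mul ha.inv
  simp [hsplit, lowerTrunc_add, lowerTrunc_eq_zero hupper, Y]

theorem lowerConj_mul_of_isLowerTriangular (a : Matrix (Fin n) (Fin n) K)
    {b : Matrix (Fin n) (Fin n) K} (hb : b.IsLowerTriangular) :
    lowerConj (a * b) = lowerConj a ∘ₗ lowerConj b := by
  ext X : 2
  have hmem : b * (X : Matrix (Fin n) (Fin n) K) * b⁻¹ ∈ strictLower K n :=
    Matrix.IsLowerTriangular.mem_strictLower_mul hb.inv (hb.mul_mem_strictLower X.2)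
  rw [LinearMap.comp_apply, coe_lowerConj, coe_lowerConj, coe_lowerConj, lowerTrunc_eq_self hmem,
    Matrix.mul_inv_rev]
  simp only [Matrix.mul_assoc]

end StrictLower

section Basis

variable (K : Type*) [Field K] (n : ℕ)

abbrev StrictLowerIndex := {p : Fin n × Fin n // p.2 < p.1}

def strictLowerEquivFun : strictLower K n ≃ₗ[K] (StrictLowerIndex n → K) where
  toFun X p := (X : Matrix (Fin n) (Fin n) K) p.1.1 p.1.2
  map_add' _ _ := rfl
  map_smul' _ _ := rfl
  invFun f := ⟨of fun i j => if h : j < i then f ⟨(i, j), h⟩ else 0, fun i j hij => by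
    simp [not_lt.mpr hij]⟩
  left_inv X := by
    ext i j
    by_cases h : j < i
    · simp [h]
    · simp [h, X.2 i j (not_lt.mp h)]
  right_inv f := by
    ext ⟨⟨i, j⟩, h⟩
    simp [h]

noncomputable def strictLowerBasis : Module.Basis (StrictLowerIndex n) K (strictLower K n) :=
  .ofEquivFun (strictLowerEquivFun K n)

variable {K n}

theorem coe_strictLowerBasis (q : StrictLowerIndex n) :
    (strictLowerBasis K n q : Matrix (Fin n) (Fin n) K) = single q.1.1 q.1.2 1 := by
  ext i j
  by_cases h : j < i
  · simp [strictLowerBasis, strictLowerEquivFun, h, single, Pi.single_apply, Subtype.ext_iff,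
      Prod.ext_iff, eq_comm]
  · rw [(strictLowerBasis K n q).2 i j (not_lt.mp h), single_apply, if_neg]
    rintro ⟨rfl, rfl⟩
    exact h q.2

theorem toMatrix_lowerConj_apply (g : Matrix (Fin n) (Fin n) K) (p q : StrictLowerIndex n) :
    LinearMap.toMatrix (strictLowerBasis K n) (strictLowerBasis K n) (lowerConj g) p q
      = g p.1.1 q.1.1 * g⁻¹ q.1.2 p.1.2 := by
  rw [LinearMap.toMatrix_apply]
  change lowerTrunc (g * (strictLowerBasis K n q : Matrix (Fin n) (Fin n) K) * g⁻¹) p.1.1 p.1.2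
    = _
  simp [lowerTrunc, p.2, coe_strictLowerBasis, mul_apply, single_apply, ite_and]

end Basis

section Det

variable {K : Type*} [Field K] {n : ℕ}

open OrderDual in
theorem blockTriangular_toMatrix_lowerConj_of_isUpperTriangular
    {g : Matrix (Fin n) (Fin n) K} (hg : g.IsUpperTriangular) :
    (LinearMap.toMatrix (strictLowerBasis K n) (strictLowerBasis K n)
      (lowerConj g)).BlockTriangular fun p => toLex (p.1.1, toDual p.1.2) := by
  intro p q hqp
  rw [toMatrix_lowerConj_apply]
  rcases Prod.Lex.lt_iff.mp hqp with h | ⟨-, h⟩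
  · exact mul_eq_zero_of_left (hg h) _
  · exact mul_eq_zero_of_right _ (hg.inv h)

open OrderDual in
theorem blockTriangular_toMatrix_lowerConj_of_isLowerTriangular
    {g : Matrix (Fin n) (Fin n) K} (hg : g.IsLowerTriangular) :
    (LinearMap.toMatrix (strictLowerBasis K n) (strictLowerBasis K n)
      (lowerConj g)).BlockTriangular fun p => toLex (toDual p.1.1, p.1.2) := by
  intro p q hqp
  rw [toMatrix_lowerConj_apply]
  rcases Prod.Lex.lt_iff.mp hqp with h | ⟨-, h⟩
  · exact mul_eq_zero_of_left (hg h) _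
  · exact mul_eq_zero_of_right _ (hg.inv h)

theorem det_lowerConj_of_isUpperTriangular {g : Matrix (Fin n) (Fin n) K}
    (hg : g.IsUpperTriangular) (hdet : IsUnit g.det) :
    LinearMap.det (lowerConj g)
      = ∏ p : StrictLowerIndex n, g p.1.1 p.1.1 * (g p.1.2 p.1.2)⁻¹ := by
  rw [← LinearMap.det_toMatrix (strictLowerBasis K n),
    (blockTriangular_toMatrix_lowerConj_of_isUpperTriangular hg).det_of_injective
      (toLex.injective.comp ((Function.injective_id.prodMap OrderDual.toDual.injective).comp
        Subtype.val_injective))]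
  simp only [toMatrix_lowerConj_apply, hg.inv_apply_self_of_injective Function.injective_id hdet]

theorem det_lowerConj_of_isLowerTriangular {g : Matrix (Fin n) (Fin n) K}
    (hg : g.IsLowerTriangular) (hdet : IsUnit g.det) :
    LinearMap.det (lowerConj g)
      = ∏ p : StrictLowerIndex n, g p.1.1 p.1.1 * (g p.1.2 p.1.2)⁻¹ := by
  rw [← LinearMap.det_toMatrix (strictLowerBasis K n),
    (blockTriangular_toMatrix_lowerConj_of_isLowerTriangular hg).det_of_injective
      (toLex.injective.comp ((OrderDual.toDual.injective.prodMap Function.injective_id).comp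
        Subtype.val_injective))]
  simp only [toMatrix_lowerConj_apply,
    hg.inv_apply_self_of_injective OrderDual.toDual.injective hdet]

end Det

theorem det_lowerConj_triangular_general {K : Type*} [Field K] {n : ℕ}
    (u v : Matrix (Fin n) (Fin n) K) (tvec : Fin n → K)
    (hu : ∀ i j : Fin n, j < i → u i j = 0) (hu1 : ∀ i, u i i = 1)
    (hv : ∀ i j : Fin n, i < j → v i j = 0) (hv1 : ∀ i, v i i = 1)
    (ht : ∀ i, tvec i ≠ 0) :
    LinearMap.det (lowerConj (u * Matrix.diagonal tvec * v))
      = ∏ p ∈ Finset.univ.filter (fun p : Fin n × Fin n => p.2 < p.1),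
          tvec p.1 * (tvec p.2)⁻¹ := by
  have hu : u.IsUpperTriangular := hu
  have hv : v.IsLowerTriangular := hv
  have hdet_u : IsUnit u.det := by simp [det_of_isUpperTriangular hu, hu1]
  have hdet_t : IsUnit (diagonal tvec).det := by
    simpa [det_diagonal, Finset.prod_ne_zero_iff] using ht
  have hdet_v : IsUnit v.det := by simp [det_of_isLowerTriangular v hv, hv1]
  rw [lowerConj_mul_of_isLowerTriangular _ hv, lowerConj_mul_of_isUpperTriangular hu,
    LinearMap.det_comp, LinearMap.det_comp, det_lowerConj_of_isUpperTriangular hu hdet_u,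
    det_lowerConj_of_isUpperTriangular (blockTriangular_diagonal tvec) hdet_t,
    det_lowerConj_of_isLowerTriangular hv hdet_v]
  simp only [hu1, hv1, diagonal_apply_eq, inv_one, mul_one, Finset.prod_const_one, one_mul]
  symm
  exact Finset.prod_subtype _ (fun _ => Finset.mem_filter_univ _) _

/-- Example 1.1 of the paper (Borel case of Lemma 1.1 (2)) for `GL(n)`: if
`g = u · t · v` with `u` upper-triangular unipotent, `t = diagonal tvec` invertible
diagonal and `v` lower-triangular unipotent, then the determinant of
`X ↦ π (g X g⁻¹)` on strictly lower-triangular matrices is `∏_{i > j} tᵢ t_j⁻¹`. -/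
theorem det_lowerConj_triangular {K : Type*} [Field K] {n : ℕ} (hn : 0 < n)
    (u v : Matrix (Fin n) (Fin n) K) (tvec : Fin n → K)
    (hu : ∀ i j : Fin n, j < i → u i j = 0) (hu1 : ∀ i, u i i = 1)
    (hv : ∀ i j : Fin n, i < j → v i j = 0) (hv1 : ∀ i, v i i = 1)
    (ht : ∀ i, tvec i ≠ 0) :
    LinearMap.det (lowerConj (u * Matrix.diagonal tvec * v))
      = ∏ p ∈ Finset.univ.filter (fun p : Fin n × Fin n => p.2 < p.1),
          tvec p.1 * (tvec p.2)⁻¹ :=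
  det_lowerConj_triangular_general u v tvec hu hu1 hv hv1 ht
end

section
/- Let K be a field and n a positive integer. Let σ be a non-identity permutation of {1, …, n} with permutation matrix P_σ, and let g = u · P_σ · t · v ∈ GL(n, K), where u is upper-triangular unipotent, t is an invertible diagonal matrix, and v is lower-triangular unipotent. Let W be the subspace of M_n(K) of strictly lower-triangular matrices, and let π : M_n(K) → W be the projection along the span of the elementary matrices E_{pq} with p ≤ q. Then the determinant of the linear endomorphism X ↦ π(g X g⁻¹) of W equals 0. -/
/-!
Pick an inversion `a < b`, `σ b < σ a` of `σ` and put `X = v⁻¹ E_{σa,σb} v`, a nonzero strictly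
lower-triangular matrix. Conjugating by `g = u P_σ t v` cancels `v`, and `P_σ t` carries
`E_{σa,σb}` to a multiple of `E_{ab}`, so `g X g⁻¹` is a multiple of `u E_{ab} u⁻¹`, which is upper
triangular because `a < b`. Hence `X` lies in the kernel of `X ↦ π (g X g⁻¹)`.
-/

open Matrix

namespace Equiv.Perm

theorem exists_inversion_of_ne_one {α : Type*} [LinearOrder α] [WellFoundedLT α]
    {σ : Perm α} (hσ : σ ≠ 1) : ∃ a b, a < b ∧ σ b < σ a := by
  by_contra! h
  have hmono : StrictMono σ := fun a b hab => (h a b hab).lt_of_ne (σ.injective.ne hab.ne)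
  apply hσ
  ext x
  exact congrArg (· x) (Subsingleton.elim (hmono.orderIsoOfSurjective σ σ.surjective) (.refl α))

end Equiv.Perm

namespace Matrix

variable {m R : Type*} [DecidableEq m] [CommRing R]

theorem BlockTriangular.inv_s9 [Fintype m] {α : Type*} [LinearOrder α] {M : Matrix m m R}
    {b : m → α} (hM : M.BlockTriangular b) : M⁻¹.BlockTriangular b := by
  by_cases h : IsUnit M.det
  · have := M.invertibleOfIsUnitDet h
    exact blockTriangular_inv_of_blockTriangular hM
  · rw [nonsing_inv_apply_not_isUnit M h]
    exact blockTriangular_zero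

theorem mul_single_mul_apply [Fintype m] (A B : Matrix m m R) (i j p q : m) (c : R) :
    (A * single i j c * B) p q = A p i * c * B j q := by
  simp [mul_apply, single_apply, ite_and]

theorem isUpperTriangular_single [LinearOrder m] {i j : m} (hij : i ≤ j) (c : R) :
    (single i j c).IsUpperTriangular := by
  rintro p q (hqp : q < p)
  rw [single_apply_of_ne]
  rintro ⟨rfl, rfl⟩
  exact hqp.not_ge hij

theorem IsLowerTriangular.mul_single_mul_apply_eq_zero [Fintype m] [LinearOrder m]
    {A B : Matrix m m R} (hA : A.IsLowerTriangular) (hB : B.IsLowerTriangular) {i j : m}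
    (hji : j < i) (c : R) {p q : m} (hpq : p ≤ q) : (A * single i j c * B) p q = 0 := by
  rw [mul_single_mul_apply]
  rcases lt_or_ge p i with hpi | hip
  · rw [hA hpi, zero_mul, zero_mul]
  · rw [hB (hji.trans_le (hip.trans hpq)), mul_zero]

variable {K : Type*} [Field K]

theorem isUnit_det_permMatrix_mul_diagonal [Fintype m] (σ : Equiv.Perm m) {t : m → K}
    (ht : ∀ i, t i ≠ 0) :
    IsUnit (σ.permMatrix K * diagonal t).det := by
  rw [det_mul, det_permutation, det_diagonal]
  exact (σ.sign.isUnit.map (Int.castRingHom K)).mul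
    (Finset.prod_ne_zero_iff.mpr fun i _ => ht i).isUnit

theorem permMatrix_mul_diagonal_conj_single [Fintype m] (σ : Equiv.Perm m) {t : m → K}
    (ht : ∀ i, t i ≠ 0) (a b : m) :
    σ.permMatrix K * diagonal t * single (σ a) (σ b) 1 * (σ.permMatrix K * diagonal t)⁻¹ =
      single a b (t (σ a) / t (σ b)) := by
  have hcomm : σ.permMatrix K * diagonal t * single (σ a) (σ b) 1 =
      single a b (t (σ a) / t (σ b)) * (σ.permMatrix K * diagonal t) := by
    rw [Matrix.mul_assoc, ← Matrix.mul_assoc (single _ _ _), PEquiv.toMatrix_toPEquiv_mul,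
      PEquiv.mul_toMatrix_toPEquiv]
    ext p q
    simp only [submatrix_apply, diagonal_mul, mul_diagonal, single_apply, id,
      Equiv.apply_eq_iff_eq, Equiv.eq_symm_apply]
    split_ifs <;> simp_all
  rw [hcomm, mul_nonsing_inv_cancel_right _ _ (isUnit_det_permMatrix_mul_diagonal σ ht)]

end Matrix

theorem lowerTrunc_eq_zero_of_isUpperTriangular {K : Type*} [Field K] {n : ℕ}
    {M : Matrix (Fin n) (Fin n) K} (hM : M.IsUpperTriangular) : lowerTrunc M = 0 := by
  ext i j
  simp only [lowerTrunc, of_apply, Matrix.zero_apply, ite_eq_right_iff]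
  exact fun hji => hM hji

theorem det_lowerConj_bruhatCell_eq_zero_general {K : Type*} [Field K] {n : ℕ}
    (σ : Equiv.Perm (Fin n)) (hσ : σ ≠ 1)
    (u v : Matrix (Fin n) (Fin n) K) (tvec : Fin n → K)
    (hu : ∀ i j : Fin n, j < i → u i j = 0)
    (hv : ∀ i j : Fin n, i < j → v i j = 0) (hv1 : ∀ i, v i i = 1)
    (ht : ∀ i, tvec i ≠ 0) :
    LinearMap.det (lowerConj (u * σ.permMatrix K * Matrix.diagonal tvec * v)) = 0 := by
  obtain ⟨a, b, hab, hba⟩ := σ.exists_inversion_of_ne_one hσ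
  have hu' : u.IsUpperTriangular := fun i j h => hu i j h
  have hv' : v.IsLowerTriangular := fun i j h => hv i j h
  have hv_det : IsUnit v.det := by simp [det_of_isLowerTriangular v hv', hv1]
  set D := σ.permMatrix K * diagonal tvec
  set E := single (σ a) (σ b) (1 : K)
  let X : strictLower K n :=
    ⟨v⁻¹ * E * v, fun _ _ hpq =>
      IsLowerTriangular.mul_single_mul_apply_eq_zero hv'.inv_s9 hv' hba 1 hpq⟩
  have hX : X ≠ 0 := by
    intro h
    have hE : v * (v⁻¹ * E * v) * v⁻¹ = E := by
      simp only [Matrix.mul_assoc, mul_nonsing_inv_cancel_left _ _ hv_det, mul_nonsing_inv _ hv_det,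
        Matrix.mul_one]
    rw [show v⁻¹ * E * v = 0 from congrArg Subtype.val h, Matrix.mul_zero, Matrix.zero_mul] at hE
    simpa [E] using congrFun (congrFun hE (σ a)) (σ b)
  have hconj : u * D * v * X * (u * D * v)⁻¹ = u * single a b (tvec (σ a) / tvec (σ b)) * u⁻¹ :=
    calc _ = u * (D * E * D⁻¹) * u⁻¹ := by
          simp only [X, Matrix.mul_inv_rev, Matrix.mul_assoc,
            mul_nonsing_inv_cancel_left _ _ hv_det]
      _ = _ := by rw [permMatrix_mul_diagonal_conj_single σ ht]
  have hker : lowerConj (u * D * v) X = 0 :=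
    Subtype.ext <| (congrArg lowerTrunc hconj).trans <| lowerTrunc_eq_zero_of_isUpperTriangular <|
      (hu'.mul (isUpperTriangular_single hab.le _)).mul hu'.inv_s9
  rw [Matrix.mul_assoc u]
  exact LinearMap.det_eq_zero_iff_ker_ne_bot.mpr ((Submodule.ne_bot_iff _).mpr ⟨X, hker, hX⟩)

/-- Example 1.1 of the paper (Borel case of Lemma 1.1 (3)) for `GL(n)`: if
`g = u · P_σ · t · v` with `σ` a non-identity permutation, `u` upper-triangular unipotent,
`t` invertible diagonal, and `v` lower-triangular unipotent, then the determinant of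
`X ↦ π (g X g⁻¹)` on strictly lower-triangular matrices vanishes. -/
theorem det_lowerConj_bruhatCell_eq_zero {K : Type*} [Field K] {n : ℕ} (hn : 0 < n)
    (σ : Equiv.Perm (Fin n)) (hσ : σ ≠ 1)
    (u v : Matrix (Fin n) (Fin n) K) (tvec : Fin n → K)
    (hu : ∀ i j : Fin n, j < i → u i j = 0) (hu1 : ∀ i, u i i = 1)
    (hv : ∀ i j : Fin n, i < j → v i j = 0) (hv1 : ∀ i, v i i = 1)
    (ht : ∀ i, tvec i ≠ 0) :
    LinearMap.det (lowerConj (u * σ.permMatrix K * Matrix.diagonal tvec * v)) = 0 :=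
  det_lowerConj_bruhatCell_eq_zero_general σ hσ u v tvec hu hv hv1 ht
end
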